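/- For every real ν with ν ∉ {−1/2, −1, −3/2, −2, ...}, both sequences y_k = Σ-representation coefficients c_k(ν) (defined, when convergent, as c_k(ν) = Σ_{n=0}^∞ a_n(ν) b_{n+k}(ν) (k+2n+ν+1/2)) and w_k = 2^(k+ν−1/2)/Γ(k+ν+1/2) satisfy the first-order recurrence (k+ν−1/2)·y_k − 2·y_{k−1} = 0; in particular, the sequence w_k satisfies (k+ν−1/2)·w_k = 2·w_{k−1} for all integers k. -/

import Mathlib

/-!
Writing `t_{j,n} = a_n(ν) b_{n+j}(ν)`, the ratios `a_{n+1}/a_n` and `b_{j+1}/b_j` are rational in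
`n`, `j`, and they make the `n`-th term of `(j + ν + 1/2) c_{j+1} - 2 c_j` equal to
`2 (n+1) t_{j,n+1} - 2 n t_{j,n}`. The partial sums therefore telescope to `2 N t_{j,N}`, which is
asymptotic to the `N`-th term `t_{j,N} (j + 2N + ν + 1/2)` of the convergent series `c_j`, hence
tends to `0`. For `w_k` the recurrence is `Γ(z + 1) = z Γ(z)` at `z = k + ν - 1/2`.
-/

/-- Rising factorial (Pochhammer symbol) `(x)_n`. -/
def risingFac (x : ℝ) (n : ℕ) : ℝ := ∏ i ∈ Finset.range n, (x + i)

/-- Falling factorial `⟨x⟩_n = x(x-1)⋯(x-n+1)`. -/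
def fallingFac (x : ℝ) (n : ℕ) : ℝ := ∏ i ∈ Finset.range n, (x - i)

/-- Coefficient `a_n(ν)` from the asymptotic expansion of `K_ν`. -/
noncomputable def aCoef (ν : ℝ) (n : ℕ) : ℝ :=
  risingFac (ν + 1 / 2) n * fallingFac (ν - 1 / 2) n / ((n.factorial : ℝ) * 2 ^ n)

/-- Coefficient `b_j(ν)` from the ascending series of `I_ν`. -/
noncomputable def bCoef (ν : ℝ) (j : ℕ) : ℝ :=
  2 ^ j * risingFac (ν + 1 / 2) j / ((j.factorial : ℝ) * risingFac (2 * ν + 1) j)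

open Filter Topology Asymptotics Finset

lemma risingFac_succ (x : ℝ) (n : ℕ) : risingFac x (n + 1) = risingFac x n * (x + n) :=
  prod_range_succ _ _

lemma fallingFac_succ (x : ℝ) (n : ℕ) : fallingFac x (n + 1) = fallingFac x n * (x - n) :=
  prod_range_succ _ _

lemma mul_aCoef_succ (ν : ℝ) (n : ℕ) :
    2 * ((n : ℝ) + 1) * aCoef ν (n + 1) = (ν + 1 / 2 + n) * (ν - 1 / 2 - n) * aCoef ν n := by
  simp only [aCoef, risingFac_succ, fallingFac_succ, Nat.factorial_succ, pow_succ, Nat.cast_mul,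
    Nat.cast_succ]
  field_simp

lemma mul_bCoef_succ (ν : ℝ) {j : ℕ} (h : 2 * ν + 1 + j ≠ 0) :
    ((j : ℝ) + 1) * (2 * ν + 1 + j) * bCoef ν (j + 1) = 2 * (ν + 1 / 2 + j) * bCoef ν j := by
  rcases eq_or_ne (risingFac (2 * ν + 1) j) 0 with hR | hR
  · simp [bCoef, risingFac_succ, hR]
  simp only [bCoef, risingFac_succ, Nat.factorial_succ, pow_succ, Nat.cast_mul, Nat.cast_succ]
  field_simp

lemma coef_recurrence_summand_eq (ν : ℝ) {j n : ℕ} (h : 2 * ν + 1 + (n + j : ℕ) ≠ 0) :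
    ((j : ℝ) + 1 + ν - 1 / 2) *
        (aCoef ν n * bCoef ν (n + (j + 1)) * ((j : ℝ) + 1 + 2 * n + ν + 1 / 2)) -
      2 * (aCoef ν n * bCoef ν (n + j) * ((j : ℝ) + 2 * n + ν + 1 / 2)) =
    2 * ((n : ℝ) + 1) * (aCoef ν (n + 1) * bCoef ν (n + 1 + j)) -
      2 * n * (aCoef ν n * bCoef ν (n + j)) := by
  rw [show n + (j + 1) = n + j + 1 by omega, show n + 1 + j = n + j + 1 by omega]
  have ha := mul_aCoef_succ ν n
  have hb := mul_bCoef_succ ν h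
  push_cast at hb
  linear_combination aCoef ν n * hb - bCoef ν (n + j + 1) * ha

lemma sum_range_coef_recurrence (ν : ℝ) (h : ∀ m : ℕ, 2 * ν + 1 + m ≠ 0) (j N : ℕ) :
    ((j : ℝ) + 1 + ν - 1 / 2) * ∑ n ∈ range N,
        aCoef ν n * bCoef ν (n + (j + 1)) * (((j + 1 : ℕ) : ℝ) + 2 * n + ν + 1 / 2) -
      2 * ∑ n ∈ range N, aCoef ν n * bCoef ν (n + j) * ((j : ℝ) + 2 * n + ν + 1 / 2) =
    2 * (N : ℝ) * (aCoef ν N * bCoef ν (N + j)) := by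
  let f : ℕ → ℝ := fun n => 2 * n * (aCoef ν n * bCoef ν (n + j))
  calc _ = ∑ n ∈ range N, (f (n + 1) - f n) := by
        rw [mul_sum, mul_sum, ← sum_sub_distrib]
        refine sum_congr rfl fun n _ => ?_
        simp only [f]
        push_cast
        exact coef_recurrence_summand_eq ν (h _)
    _ = f N - f 0 := sum_range_sub f N
    _ = _ := by simp [f]

lemma tendsto_zero_of_tendsto_sum_range {E : Type*} [AddCommGroup E] [TopologicalSpace E]
    [IsTopologicalAddGroup E] {u : ℕ → E} {s : E}
    (hs : Tendsto (fun N => ∑ n ∈ range N, u n) atTop (𝓝 s)) : Tendsto u atTop (𝓝 0) := by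
  simpa [sum_range_succ] using (hs.comp (tendsto_add_atTop_nat 1)).sub hs

lemma tendsto_mul_of_tendsto_mul_const_add {α : Type*} {l : Filter α} {u f : α → ℝ}
    (β : ℝ) (hf : Tendsto f l atTop) (h : Tendsto (fun x => u x * (β + f x)) l (𝓝 0)) :
    Tendsto (fun x => u x * f x) l (𝓝 0) :=
  have hβf : (fun x => β + f x) ~[l] f :=
    IsEquivalent.refl.const_add_of_norm_tendsto_atTop (tendsto_norm_atTop_atTop.comp hf)
  (IsEquivalent.refl.mul hβf).tendsto_nhds h

lemma mul_two_rpow_div_Gamma_add_one (z : ℝ) :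
    z * ((2 : ℝ) ^ z / Real.Gamma (z + 1)) = 2 * ((2 : ℝ) ^ (z - 1) / Real.Gamma z) := by
  rcases eq_or_ne z 0 with rfl | hz
  · simp [Real.Gamma_zero]
  rw [Real.Gamma_add_one hz, Real.rpow_sub_one two_ne_zero]
  field_simp

theorem recurrence_for_coefficients (ν : ℝ)
    (hν : ∀ j : ℕ, ν ≠ -((j : ℝ) + 1) / 2)
    (c : ℕ → ℝ)
    (hc : ∀ j : ℕ, Filter.Tendsto
      (fun N : ℕ => ∑ n ∈ Finset.range N,
        aCoef ν n * bCoef ν (n + j) * ((j : ℝ) + 2 * n + ν + 1 / 2))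
      Filter.atTop (nhds (c j)))
    (w : ℤ → ℝ)
    (hw : ∀ k : ℤ, w k = (2 : ℝ) ^ ((k : ℝ) + ν - 1 / 2) / Real.Gamma ((k : ℝ) + ν + 1 / 2)) :
    (∀ j : ℕ, 1 ≤ j → ((j : ℝ) + ν - 1 / 2) * c j - 2 * c (j - 1) = 0) ∧
    (∀ k : ℤ, ((k : ℝ) + ν - 1 / 2) * w k = 2 * w (k - 1)) := by
  have h2ν : ∀ m : ℕ, 2 * ν + 1 + m ≠ 0 := fun m h => hν m (by linarith)
  refine ⟨fun j hj => ?_, fun k => ?_⟩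
  · obtain ⟨i, rfl⟩ : ∃ i, j = i + 1 := ⟨j - 1, by omega⟩
    have hlim := ((hc (i + 1)).const_mul ((i : ℝ) + 1 + ν - 1 / 2)).sub ((hc i).const_mul 2)
    simp only [sum_range_coef_recurrence ν h2ν] at hlim
    have hterm :
        Tendsto (fun N : ℕ => 2 * (N : ℝ) * (aCoef ν N * bCoef ν (N + i))) atTop (𝓝 0) :=
      (tendsto_mul_of_tendsto_mul_const_add (u := fun N => aCoef ν N * bCoef ν (N + i))
        ((i : ℝ) + ν + 1 / 2) (tendsto_natCast_atTop_atTop.const_mul_atTop two_pos)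
        ((tendsto_zero_of_tendsto_sum_range (hc i)).congr fun N => by ring)).congr fun N => by ring
    have := tendsto_nhds_unique hlim hterm
    push_cast at this ⊢
    linarith
  · rw [hw, hw]
    convert mul_two_rpow_div_Gamma_add_one ((k : ℝ) + ν - 1 / 2) using 4 <;> push_cast <;> ring
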